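/- Every homogeneous linear super commuting map f on the centerless super-Virasoro algebra S(1/2) (i.e. every homogeneous linear map f : S(1/2) → S(1/2) with [f(x), x] = 0 for all x ∈ S(1/2)) has the form f(x) = λx for some λ ∈ ℂ and all x ∈ S(1/2). -/

import Mathlib

/-- The underlying vector space of the centerless super-Virasoro algebra `S(1/2)`:
the first factor records the coefficients of the even basis `{L_m | m ∈ ℤ}`, and the
second factor the coefficients of the odd basis `{G_k | k ∈ 1/2 + ℤ}`, where the
half-integer index `k = n + 1/2` is recorded by the integer `n`. -/
abbrev SVirHalf : Type := (ℤ →₀ ℂ) × (ℤ →₀ ℂ)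

/-- The even basis vector `L_m` of `S(1/2)`. -/
noncomputable def Lgen (m : ℤ) : SVirHalf := (Finsupp.single m 1, 0)

/-- The odd basis vector `G_{n+1/2}` of `S(1/2)`, indexed by `n ∈ ℤ`. -/
noncomputable def Ggen (n : ℤ) : SVirHalf := (0, Finsupp.single n 1)

/-- The super bracket of `S(1/2)`, determined by `[L_m, L_n] = (n-m)L_{m+n}`,
`[L_m, G_k] = (k - m/2)G_{m+k}`, `[G_k, L_m] = -(k - m/2)G_{m+k}` and
`[G_k, G_l] = 2L_{k+l}` for `m, n ∈ ℤ` and `k, l ∈ 1/2 + ℤ`, extended bilinearly;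
here the odd index `k = n + 1/2` is recorded by `n ∈ ℤ`, so that
`[L_m, G_{n+1/2}] = (n + 1/2 - m/2)G_{(m+n)+1/2}` and
`[G_{n+1/2}, G_{p+1/2}] = 2L_{n+p+1}`. -/
noncomputable def sbk (x y : SVirHalf) : SVirHalf :=
  ( x.1.sum (fun m a => y.1.sum fun n b =>
      Finsupp.single (m + n) (a * b * ((n : ℂ) - (m : ℂ))))
    + x.2.sum (fun n a => y.2.sum fun p b =>
      Finsupp.single (n + p + 1) (2 * (a * b))),
    x.1.sum (fun m a => y.2.sum fun n b =>
      Finsupp.single (m + n) (a * b * ((n : ℂ) + 1 / 2 - (m : ℂ) / 2)))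
    + x.2.sum (fun n a => y.1.sum fun m b =>
      Finsupp.single (m + n) (-(a * b * ((n : ℂ) + 1 / 2 - (m : ℂ) / 2)))) )

/-- The homogeneous components of `S(1/2)`: degree `0̄` is the even part (the span of
the `L_m`), degree `1̄` is the odd part (the span of the `G_k`). -/
def grad : ZMod 2 → Set SVirHalf := fun i =>
  if i = 0 then {x | x.2 = 0} else {x | x.1 = 0}

/-- A super-biderivation of homogeneous degree `d` of `S(1/2)`: a bilinear map
`φ : S(1/2) × S(1/2) → S(1/2)` with `φ(L_α, L_β) ⊆ L_{α+β+d}`, skew-supersymmetric,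
`φ(x,y) = -(-1)^{|x||y|}φ(y,x)`, and satisfying
`φ([x,y],z) = (-1)^{d|x|}[x,φ(y,z)] + (-1)^{|y||z|}[φ(x,z),y]` and
`φ(x,[y,z]) = [φ(x,y),z] + (-1)^{(d+|x|)|y|}[y,φ(x,z)]` for homogeneous `x, y, z`. -/
def IsSuperBiderivationSV (d : ZMod 2) (φ : SVirHalf →ₗ[ℂ] SVirHalf →ₗ[ℂ] SVirHalf) : Prop :=
  (∀ (α β : ZMod 2) (x y : SVirHalf), x ∈ grad α → y ∈ grad β →
      φ x y ∈ grad (α + β + d)) ∧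
  (∀ (α β : ZMod 2) (x y : SVirHalf), x ∈ grad α → y ∈ grad β →
      φ x y = (-(-1 : ℂ) ^ (α * β).val) • φ y x) ∧
  (∀ (α β γ : ZMod 2) (x y z : SVirHalf), x ∈ grad α → y ∈ grad β → z ∈ grad γ →
      φ (sbk x y) z =
        ((-1 : ℂ) ^ (d * α).val) • sbk x (φ y z) +
          ((-1 : ℂ) ^ (β * γ).val) • sbk (φ x z) y) ∧
  (∀ (α β γ : ZMod 2) (x y z : SVirHalf), x ∈ grad α → y ∈ grad β → z ∈ grad γ →
      φ x (sbk y z) =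
        sbk (φ x y) z + ((-1 : ℂ) ^ ((d + α) * β).val) • sbk y (φ x z))

lemma sbk_add_left (x y z : SVirHalf) : sbk (x + y) z = sbk x z + sbk y z := by
  unfold sbk
  refine Prod.ext ?_ ?_ <;>
  · simp only [Prod.fst_add, Prod.snd_add]
    rw [Finsupp.sum_add_index (by intros; simp) ?_, Finsupp.sum_add_index (by intros; simp) ?_]
    · abel
    all_goals
      intros m _ b1 b2
      rw [← Finsupp.sum_add]
      refine Finsupp.sum_congr fun n _ => ?_
      rw [← Finsupp.single_add]
      congr 1
      ring

lemma sbk_add_right (x y z : SVirHalf) : sbk x (y + z) = sbk x y + sbk x z := by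
  unfold sbk
  refine Prod.ext ?_ ?_ <;>
  · simp only [Prod.fst_add, Prod.snd_add]
    rw [show ∀ a b c d : ℤ →₀ ℂ, (a+b)+(c+d) = (a+c)+(b+d) from fun _ _ _ _ => by abel]
    congr 1 <;>
    · rw [← Finsupp.sum_add]
      refine Finsupp.sum_congr fun m a => ?_
      rw [Finsupp.sum_add_index (by intros; simp) ?_]
      intros n _ b1 b2
      rw [← Finsupp.single_add]
      congr 1
      ring

lemma sbk_zero_left (x : SVirHalf) : sbk 0 x = 0 := by
  simp [sbk]

lemma sbk_Ggen (x : SVirHalf) (p : ℤ) :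
    sbk x (Ggen p) =
      ( x.2.sum fun j c => Finsupp.single (j + p + 1) (2 * c),
        x.1.sum fun j c => Finsupp.single (j + p) (c * ((p : ℂ) + 1 / 2 - (j : ℂ) / 2)) ) := by
  unfold sbk Ggen
  refine Prod.ext ?_ ?_ <;>
  · simp only [Finsupp.sum_zero_index, Finsupp.sum_fun_zero, zero_add, add_zero]
    refine Finsupp.sum_congr fun j _ => ?_
    rw [Finsupp.sum_single_index (by simp)]
    simp [mul_one]

lemma extract_zero {a : ℤ →₀ ℂ} {g : ℤ → ℤ} (hg : Function.Injective g) {h : ℤ → ℂ → ℂ}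
    (h0 : ∀ j, h j 0 = 0)
    (H : (a.sum fun j c => Finsupp.single (g j) (h j c)) = 0) (k : ℤ) : h k (a k) = 0 := by
  by_cases hk : k ∈ a.support
  · have := DFunLike.congr_fun H (g k)
    rw [Finsupp.sum_apply, Finsupp.sum] at this
    simp only [Finsupp.single_apply, hg.eq_iff, Finsupp.coe_zero, Pi.zero_apply] at this
    rwa [Finset.sum_ite_eq' a.support k (fun j => h j (a j)), if_pos hk] at this
  · rw [Finsupp.notMem_support_iff.mp hk, h0]

lemma single_of_support {d : ℤ →₀ ℂ} (k : ℤ) (h : ∀ j, j ≠ k → d j = 0) :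
    d = Finsupp.single k (d k) := by
  ext j
  rcases eq_or_ne j k with rfl | hj
  · exact (Finsupp.single_eq_same).symm
  · rw [h j hj, Finsupp.single_apply, if_neg (fun hkj => hj hkj.symm)]


/-- every homogeneous linear super commuting map `f` on the centerless
super-Virasoro algebra `S(1/2)` (a linear map of homogeneous degree `e` with
`[f(x), x] = 0` for all `x`) has the form `f(x) = λx` for some `λ ∈ ℂ`. -/
theorem superCommutingMap_SVirHalf (f : SVirHalf →ₗ[ℂ] SVirHalf) (e : ZMod 2)
    (hdeg : ∀ (α : ZMod 2) (x : SVirHalf), x ∈ grad α → f x ∈ grad (α + e))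
    (hcomm : ∀ x : SVirHalf, sbk (f x) x = 0) :
    ∃ lam : ℂ, ∀ x : SVirHalf, f x = lam • x := by
  -- polarization
  have polar : ∀ x y : SVirHalf, sbk (f x) y + sbk (f y) x = 0 := by
    intro x y
    have h := hcomm (x + y)
    rw [map_add, sbk_add_left, sbk_add_right, sbk_add_right, hcomm x, hcomm y] at h
    simpa using h
  -- analysis of f on the odd generators
  have hGsnd : ∀ n : ℤ, (f (Ggen n)).2 = 0 := by
    intro n
    have h := hcomm (Ggen n)
    rw [sbk_Ggen] at h
    have h1 := congrArg Prod.fst h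
    simp only [Prod.fst_zero] at h1
    ext k
    have := extract_zero (g := fun j => j + n + 1) (h := fun _ c => 2 * c)
      (fun j1 j2 hj => by dsimp only at hj; omega) (fun j => by ring) h1 k
    simp only [Finsupp.coe_zero, Pi.zero_apply]
    linear_combination this / 2
  have hGfst : ∀ n : ℤ, (f (Ggen n)).1 =
      Finsupp.single (2 * n + 1) ((f (Ggen n)).1 (2 * n + 1)) := by
    intro n
    have h := hcomm (Ggen n)
    rw [sbk_Ggen] at h
    have h2 := congrArg Prod.snd h
    simp only [Prod.snd_zero] at h2
    refine single_of_support _ fun j hj => ?_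
    have := extract_zero (g := fun j => j + n) (h := fun j c => c * ((n : ℂ) + 1/2 - (j : ℂ)/2))
      (fun j1 j2 hj => by dsimp only at hj; omega) (fun j => by ring) h2 j
    have hne : ((n : ℂ) + 1/2 - (j : ℂ)/2) ≠ 0 := by
      intro h0
      apply hj
      have : ((2 * n + 1 : ℤ) : ℂ) = ((j : ℤ) : ℂ) := by push_cast; linear_combination 2 * h0
      exact_mod_cast this.symm
    exact (mul_eq_zero.mp this).resolve_right hne
  -- f vanishes on the odd generators
  have hG : ∀ n : ℤ, f (Ggen n) = 0 := by
    intro n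
    have hp := polar (Ggen n) (Ggen (n + 1))
    rw [sbk_Ggen, sbk_Ggen] at hp
    have hp2 := congrArg Prod.snd hp
    simp only [Prod.snd_add, Prod.snd_zero] at hp2
    rw [hGfst n, hGfst (n + 1), Finsupp.sum_single_index (by simp),
      Finsupp.sum_single_index (by simp)] at hp2
    have hv := DFunLike.congr_fun hp2 (3 * n + 2)
    simp only [Finsupp.add_apply, Finsupp.single_apply, Finsupp.coe_zero, Pi.zero_apply] at hv
    rw [if_pos (by ring), if_neg (by omega)] at hv
    have hc : (f (Ggen n)).1 (2 * n + 1) = 0 := by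
      push_cast at hv
      linear_combination hv
    have : (f (Ggen n)).1 = 0 := by rw [hGfst n, hc, Finsupp.single_zero]
    exact Prod.ext this (hGsnd n)
  -- f vanishes on the even generators
  have hL : ∀ m : ℤ, f (Lgen m) = 0 := by
    intro m
    have key : ∀ p : ℤ, sbk (f (Lgen m)) (Ggen p) = 0 := by
      intro p
      have hp := polar (Lgen m) (Ggen p)
      rw [hG p, sbk_zero_left, add_zero] at hp
      exact hp
    have hb : (f (Lgen m)).2 = 0 := by
      have h := key 0
      rw [sbk_Ggen] at h
      have h1 := congrArg Prod.fst h
      simp only [Prod.fst_zero] at h1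
      ext k
      have := extract_zero (g := fun j => j + 0 + 1) (h := fun _ c => 2 * c)
        (fun j1 j2 hj => by dsimp only at hj; omega) (fun j => by ring) h1 k
      simp only [Finsupp.coe_zero, Pi.zero_apply]
      linear_combination this / 2
    have ha : (f (Lgen m)).1 = 0 := by
      ext k
      have e1 : (f (Lgen m)).1 k * ((k : ℂ) + 1/2 - (k : ℂ)/2) = 0 := by
        have h := key k
        rw [sbk_Ggen] at h
        have h2 := congrArg Prod.snd h
        simp only [Prod.snd_zero] at h2
        exact extract_zero (g := fun j => j + k)
          (h := fun j c => c * ((k : ℂ) + 1/2 - (j : ℂ)/2))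
          (fun j1 j2 hj => by dsimp only at hj; omega) (fun j => by ring) h2 k
      have e2 : (f (Lgen m)).1 k * (((k + 1 : ℤ) : ℂ) + 1/2 - (k : ℂ)/2) = 0 := by
        have h := key (k + 1)
        rw [sbk_Ggen] at h
        have h2 := congrArg Prod.snd h
        simp only [Prod.snd_zero] at h2
        exact extract_zero (g := fun j => j + (k + 1))
          (h := fun j c => c * (((k + 1 : ℤ) : ℂ) + 1/2 - (j : ℂ)/2))
          (fun j1 j2 hj => by dsimp only at hj; omega) (fun j => by ring) h2 k
      simp only [Finsupp.coe_zero, Pi.zero_apply]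
      push_cast at e1 e2
      linear_combination e2 - e1
    exact Prod.ext ha hb
  -- conclude : f = 0
  refine ⟨0, fun x => ?_⟩
  rw [zero_smul]
  have hfst : ∀ q : ℤ →₀ ℂ, f (q, 0) = 0 := by
    intro q
    induction q using Finsupp.induction_linear with
    | zero => exact map_zero f
    | add p q hp hq =>
        have : ((p + q : ℤ →₀ ℂ), (0 : ℤ →₀ ℂ)) = (p, 0) + (q, 0) := by
          simp [Prod.ext_iff]
        rw [this, map_add, hp, hq, add_zero]
    | single m c =>
        have : ((Finsupp.single m c : ℤ →₀ ℂ), (0 : ℤ →₀ ℂ)) = c • Lgen m := by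
          rw [Lgen, Prod.smul_mk, smul_zero, Finsupp.smul_single', mul_one]
        rw [this, map_smul, hL m, smul_zero]
  have hsnd : ∀ q : ℤ →₀ ℂ, f (0, q) = 0 := by
    intro q
    induction q using Finsupp.induction_linear with
    | zero => exact map_zero f
    | add p q hp hq =>
        have : ((0 : ℤ →₀ ℂ), (p + q : ℤ →₀ ℂ)) = (0, p) + (0, q) := by
          simp [Prod.ext_iff]
        rw [this, map_add, hp, hq, add_zero]
    | single m c =>
        have : ((0 : ℤ →₀ ℂ), (Finsupp.single m c : ℤ →₀ ℂ)) = c • Ggen m := by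
          rw [Ggen, Prod.smul_mk, smul_zero, Finsupp.smul_single', mul_one]
        rw [this, map_smul, hG m, smul_zero]
  have hx : x = (x.1, 0) + (0, x.2) := by simp [Prod.ext_iff]
  rw [hx, map_add, hfst, hsnd, add_zero]
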